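/- arXiv:2304.12955 — 2 statements merged into one kernel-verified Lean document; each statement's English description precedes it below -/
import Mathlib

section
/- For every context-free grammar G, there exists a context-free grammar G' equivalent to G (i.e., generating the same language) that is in 2-Greibach normal form: the start variable S of G' does not appear on the right-hand side of any rule of G', and every rule of G' has one of the forms S → ε, A → a, or A → a b B₁⋯B_p with p ≥ 0, where a, b are terminals and A, B₁, …, B_p are variables. -/
/-- A context-free grammar is in *2-Greibach normal form* if its start variable does not
appear on the right-hand side of any rule, and every rule has one of the forms
`S → ε`, `A → a`, or `A → a b B₁⋯B_p` with `p ≥ 0`, where `a, b` are terminals and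
`A, B₁, …, B_p` are variables. -/
def ContextFreeGrammar.InTwoGNF {T : Type} (G : ContextFreeGrammar T) : Prop :=
  (∀ r ∈ G.rules, Symbol.nonterminal G.initial ∉ r.output) ∧
  ∀ r ∈ G.rules,
    (r.input = G.initial ∧ r.output = []) ∨
    (∃ a : T, r.output = [Symbol.terminal a]) ∨
    (∃ (a b : T) (Bs : List G.NT),
      r.output = Symbol.terminal a :: Symbol.terminal b :: Bs.map Symbol.nonterminal)

/-!
Greibach normal form is reached by a left-corner transform. Besides a fresh start variable, the
new grammar has a variable `word s` for every symbol `s`, generating the nonempty words that `s`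
derives, and `after A x` for every variable `A` and symbol `x`, generating the nonempty `w` with
`A ⇒* x w`. A word of `word B` with at least two letters lies in `c · after B c` for its first
letter `c`. A derivation `A ⇒* x w` is cut at the rule `X → γ₁ x γ₂` (with `γ₁ ⇒* ε`) that
produces `x` at the bottom of its leftmost path: `w` is a word of `γ₂`, whose first letter becomes
the leading terminal of the new rule, followed by a word of `after A X` (or by nothing, if
`A ⇒* X`). Every right-hand side is then a terminal followed by variables, and expanding the
first of these variables by its own rules gives 2-Greibach normal form. Both inclusions of
languages are proved by induction on the length of derivations.
-/

namespace List

lemma Forall₂.append_split {α β : Type*} {R : α → β → Prop} {l₁ l₂ : List α}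
    {ws : List β} (h : Forall₂ R (l₁ ++ l₂) ws) :
    ∃ ws₁ ws₂, ws = ws₁ ++ ws₂ ∧ Forall₂ R l₁ ws₁ ∧ Forall₂ R l₂ ws₂ := by
  induction l₁ generalizing ws with
  | nil => exact ⟨[], ws, rfl, .nil, h⟩
  | cons x l₁ ih =>
    obtain _ | ⟨hx, h'⟩ := h
    obtain ⟨ws₁, ws₂, rfl, h₁, h₂⟩ := ih h'
    exact ⟨_ :: ws₁, ws₂, rfl, .cons hx h₁, h₂⟩

end List

namespace ContextFreeRule

variable {T N : Type*} {r : ContextFreeRule T N}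

lemma Rewrites.append_cases {α β v : List (Symbol T N)} (h : r.Rewrites (α ++ β) v) :
    (∃ α', r.Rewrites α α' ∧ v = α' ++ β) ∨ (∃ β', r.Rewrites β β' ∧ v = α ++ β') := by
  induction α generalizing v with
  | nil => exact .inr ⟨v, h, rfl⟩
  | cons x α ih =>
    cases h with
    | head s => exact .inl ⟨r.output ++ α, .head α, by simp⟩
    | cons x h' =>
      rcases ih h' with ⟨α', hr, rfl⟩ | ⟨β', hr, rfl⟩
      · exact .inl ⟨x :: α', hr.cons x, rfl⟩
      · exact .inr ⟨β', hr, rfl⟩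

end ContextFreeRule

namespace ContextFreeGrammar

open Symbol

section Derivations

variable {T : Type*} {g : ContextFreeGrammar T}

def DerivesIn (g : ContextFreeGrammar T) : ℕ → List (Symbol T g.NT) → List (Symbol T g.NT) → Prop
  | 0, u, v => u = v
  | n + 1, u, v => ∃ u', g.Produces u u' ∧ g.DerivesIn n u' v

lemma DerivesIn.derives {n : ℕ} {u v : List (Symbol T g.NT)} (h : g.DerivesIn n u v) :
    g.Derives u v := by
  induction n generalizing u with
  | zero => rw [show u = v from h]
  | succ n ih => obtain ⟨u', hp, hd⟩ := h; exact hp.trans_derives (ih hd)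

lemma DerivesIn.trans_produces {n : ℕ} {u v w : List (Symbol T g.NT)} (h : g.DerivesIn n u v)
    (hp : g.Produces v w) : g.DerivesIn (n + 1) u w := by
  induction n generalizing u with
  | zero => exact ⟨w, (show u = v from h) ▸ hp, rfl⟩
  | succ n ih => obtain ⟨u', hu, hd⟩ := h; exact ⟨u', hu, ih hd⟩

lemma derives_iff_exists_derivesIn {u v : List (Symbol T g.NT)} :
    g.Derives u v ↔ ∃ n, g.DerivesIn n u v := by
  refine ⟨fun h => ?_, fun ⟨n, hn⟩ => hn.derives⟩
  induction h with
  | refl => exact ⟨0, rfl⟩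
  | tail _ hp ih => obtain ⟨n, hn⟩ := ih; exact ⟨n + 1, hn.trans_produces hp⟩

lemma DerivesIn.trans {m n : ℕ} {u v w : List (Symbol T g.NT)} (h₁ : g.DerivesIn m u v)
    (h₂ : g.DerivesIn n v w) : g.DerivesIn (m + n) u w := by
  induction m generalizing u with
  | zero => rw [show u = v from h₁, Nat.zero_add]; exact h₂
  | succ m ih =>
    obtain ⟨u', hp, hd⟩ := h₁
    rw [Nat.add_right_comm]
    exact ⟨u', hp, ih hd⟩

lemma DerivesIn.append_right {n : ℕ} {u v : List (Symbol T g.NT)} (h : g.DerivesIn n u v)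
    (p : List (Symbol T g.NT)) : g.DerivesIn n (u ++ p) (v ++ p) := by
  induction n generalizing u with
  | zero => rw [show u = v from h]; rfl
  | succ n ih => obtain ⟨u', hp, hd⟩ := h; exact ⟨u' ++ p, hp.append_right p, ih hd⟩

lemma DerivesIn.append_left {n : ℕ} {u v : List (Symbol T g.NT)} (h : g.DerivesIn n u v)
    (p : List (Symbol T g.NT)) : g.DerivesIn n (p ++ u) (p ++ v) := by
  induction n generalizing u with
  | zero => rw [show u = v from h]; rfl
  | succ n ih => obtain ⟨u', hp, hd⟩ := h; exact ⟨p ++ u', hp.append_left p, ih hd⟩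

lemma DerivesIn.append {m n : ℕ} {u v u' v' : List (Symbol T g.NT)} (h₁ : g.DerivesIn m u v)
    (h₂ : g.DerivesIn n u' v') : g.DerivesIn (m + n) (u ++ u') (v ++ v') :=
  (h₁.append_right u').trans (h₂.append_left v)

lemma DerivesIn.append_split {n : ℕ} {α β v : List (Symbol T g.NT)}
    (h : g.DerivesIn n (α ++ β) v) :
    ∃ n₁ n₂ v₁ v₂, n₁ + n₂ = n ∧ v = v₁ ++ v₂ ∧ g.DerivesIn n₁ α v₁ ∧ g.DerivesIn n₂ β v₂ := by
  induction n generalizing α β with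
  | zero => exact ⟨0, 0, α, β, rfl, (show α ++ β = v from h).symm, rfl, rfl⟩
  | succ n ih =>
    obtain ⟨u', ⟨r, hr, hrw⟩, hd⟩ := h
    rcases hrw.append_cases with ⟨α', hrw', rfl⟩ | ⟨β', hrw', rfl⟩
    · obtain ⟨n₁, n₂, v₁, v₂, hn, hv, h₁, h₂⟩ := ih hd
      exact ⟨n₁ + 1, n₂, v₁, v₂, by omega, hv, ⟨α', ⟨r, hr, hrw'⟩, h₁⟩, h₂⟩
    · obtain ⟨n₁, n₂, v₁, v₂, hn, hv, h₁, h₂⟩ := ih hd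
      exact ⟨n₁, n₂ + 1, v₁, v₂, by omega, hv, h₁, ⟨β', ⟨r, hr, hrw'⟩, h₂⟩⟩

lemma DerivesIn.terminal_append_split {n : ℕ} {α β : List (Symbol T g.NT)} {w : List T}
    (h : g.DerivesIn n (α ++ β) (w.map terminal)) :
    ∃ n₁ n₂ w₁ w₂, n₁ + n₂ = n ∧ w = w₁ ++ w₂ ∧
      g.DerivesIn n₁ α (w₁.map terminal) ∧ g.DerivesIn n₂ β (w₂.map terminal) := by
  obtain ⟨n₁, n₂, v₁, v₂, hn, hv, h₁, h₂⟩ := h.append_split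
  obtain ⟨w₁, w₂, rfl, rfl, rfl⟩ := List.map_eq_append_iff.mp hv
  exact ⟨n₁, n₂, w₁, w₂, hn, rfl, h₁, h₂⟩

lemma DerivesIn.eq_nil {n : ℕ} {v : List (Symbol T g.NT)} (h : g.DerivesIn n [] v) : v = [] := by
  cases n with
  | zero => exact (show [] = v from h).symm
  | succ n =>
    obtain ⟨u', ⟨r, _, hrw⟩, _⟩ := h
    obtain ⟨p, q, hpq, -⟩ := hrw.exists_parts
    simp at hpq

lemma DerivesIn.eq_of_terminal {n : ℕ} {a : T} {v : List (Symbol T g.NT)}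
    (h : g.DerivesIn n [terminal a] v) : v = [terminal a] := by
  cases n with
  | zero => exact (show [terminal a] = v from h).symm
  | succ n =>
    obtain ⟨u', ⟨r, _, hrw⟩, _⟩ := h
    obtain ⟨p, q, hpq, -⟩ := hrw.exists_parts
    rcases p with _ | ⟨x, _ | ⟨y, p⟩⟩ <;> simp at hpq

lemma DerivesIn.cases_nonterminal {n : ℕ} {A : g.NT} {v : List (Symbol T g.NT)}
    (h : g.DerivesIn n [nonterminal A] v) :
    (n = 0 ∧ v = [nonterminal A]) ∨
      ∃ r ∈ g.rules, r.input = A ∧ ∃ m, m + 1 = n ∧ g.DerivesIn m r.output v := by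
  cases n with
  | zero => exact .inl ⟨rfl, (show [nonterminal A] = v from h).symm⟩
  | succ n =>
    obtain ⟨u', ⟨r, hr, hrw⟩, hd⟩ := h
    rw [ContextFreeRule.rewrites_iff] at hrw
    obtain ⟨p, q, hpq, rfl⟩ := hrw
    obtain ⟨rfl, hA, rfl⟩ : p = [] ∧ A = r.input ∧ q = [] := by
      rcases p with _ | ⟨x, _ | ⟨y, p⟩⟩ <;> simp_all
    exact .inr ⟨r, hr, hA.symm, n, rfl, by simpa using hd⟩

lemma DerivesIn.terminal_cons {n : ℕ} {c : T} {α : List (Symbol T g.NT)} {w : List T}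
    (h : g.DerivesIn n (terminal c :: α) (w.map terminal)) :
    ∃ w', w = c :: w' ∧ g.DerivesIn n α (w'.map terminal) := by
  obtain ⟨n₁, n₂, w₁, w₂, hn, rfl, h₁, h₂⟩ := DerivesIn.terminal_append_split (α := [_]) h
  obtain ⟨c', rfl, hc⟩ := List.map_eq_singleton_iff.mp h₁.eq_of_terminal
  cases hc
  cases n₁ with
  | zero => exact ⟨w₂, rfl, by rwa [← hn, Nat.zero_add]⟩
  | succ => obtain ⟨_, ⟨r, _, hrw⟩, _⟩ := h₁; cases hrw with | cons _ h => cases h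

lemma Derives.append {u v u' v' : List (Symbol T g.NT)} (h₁ : g.Derives u v)
    (h₂ : g.Derives u' v') : g.Derives (u ++ u') (v ++ v') :=
  (h₁.append_right u').trans (h₂.append_left v)

lemma derives_of_rules_derivable {R : Finset (ContextFreeRule T g.NT)}
    (hR : ∀ r ∈ R, g.Derives [nonterminal r.input] r.output) {u v : List (Symbol T g.NT)}
    (h : (⟨g.NT, g.initial, R⟩ : ContextFreeGrammar T).Derives u v) : g.Derives u v := by
  induction h with
  | refl => rfl
  | tail _ hp ih =>
    obtain ⟨r, hr, hrw⟩ := hp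
    obtain ⟨p, q, rfl, rfl⟩ := hrw.exists_parts
    simpa using ih.trans (((hR r hr).append_left p).append_right q)

lemma DerivesIn.exists_forall₂ {n : ℕ} {P : g.NT → List T → Prop}
    (hP : ∀ m ≤ n, ∀ A w, g.DerivesIn m [nonterminal A] (w.map terminal) → P A w)
    {ns : List g.NT} {w : List T} (h : g.DerivesIn n (ns.map nonterminal) (w.map terminal)) :
    ∃ ws, w = ws.flatten ∧ List.Forall₂ P ns ws := by
  induction ns generalizing n w with
  | nil => exact ⟨[], by simpa using h.eq_nil, .nil⟩
  | cons A ns ih =>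
    obtain ⟨n₁, n₂, w₁, w₂, hn, rfl, h₁, h₂⟩ :=
      DerivesIn.terminal_append_split (α := [nonterminal A]) h
    obtain ⟨ws, rfl, hws⟩ := ih (fun m hm => hP m (by omega)) h₂
    exact ⟨w₁ :: ws, rfl, .cons (hP n₁ (by omega) A w₁ h₁) hws⟩

lemma derives_of_forall₂ {ns : List g.NT} {ws : List (List T)}
    (h : List.Forall₂ (fun A w => g.Derives [nonterminal A] (w.map terminal)) ns ws) :
    g.Derives (ns.map nonterminal) (ws.flatten.map terminal) := by
  induction h with
  | nil => rfl
  | cons hA _ ih => simpa using hA.append ih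

lemma DerivesIn.exists_first {n : ℕ} {γ ρ : List (Symbol T g.NT)} {x : Symbol T g.NT}
    (h : g.DerivesIn n γ (x :: ρ)) :
    ∃ γ₁ s γ₂ ρ₁ ρ₂ m₀ m₁ m₂, γ = γ₁ ++ s :: γ₂ ∧ g.DerivesIn m₀ γ₁ [] ∧
      g.DerivesIn m₁ [s] (x :: ρ₁) ∧ g.DerivesIn m₂ γ₂ ρ₂ ∧ ρ = ρ₁ ++ ρ₂ ∧ m₀ + m₁ + m₂ = n := by
  induction γ generalizing n ρ with
  | nil => simpa using h.eq_nil
  | cons s γ ih =>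
    obtain ⟨n₁, n₂, v₁, v₂, hn, hv, h₁, h₂⟩ := DerivesIn.append_split (α := [s]) h
    cases v₁ with
    | nil =>
      rw [List.nil_append] at hv
      obtain ⟨γ₁, s', γ₂, ρ₁, ρ₂, m₀, m₁, m₂, rfl, h₀, hs, h₂', rfl, hm⟩ := ih (hv ▸ h₂)
      exact ⟨s :: γ₁, s', γ₂, ρ₁, ρ₂, n₁ + m₀, m₁, m₂, rfl, h₁.append h₀, hs, h₂', rfl, by omega⟩
    | cons y v₁ =>
      obtain ⟨rfl, rfl⟩ := List.cons_eq_cons.mp hv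
      exact ⟨[], s, γ, v₁, v₂, 0, n₁, n₂, rfl, rfl, h₁, h₂, rfl, by omega⟩

/-- The rule that produces the leftmost symbol `x`, found at the bottom of the leftmost path of
the derivation tree: everything left of `x` in it is erased, everything right of it derives a
prefix of `ρ`. -/
lemma DerivesIn.exists_corner {n : ℕ} {A : g.NT} {x : Symbol T g.NT} {ρ : List (Symbol T g.NT)}
    (h : g.DerivesIn n [nonterminal A] (x :: ρ)) :
    (x = nonterminal A ∧ ρ = []) ∨
      ∃ r ∈ g.rules, ∃ γ₁ γ₂ ρ₁ ρ₂ n₁ n₂, r.output = γ₁ ++ x :: γ₂ ∧ g.Derives γ₁ [] ∧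
        g.DerivesIn n₁ [nonterminal A] (nonterminal r.input :: ρ₂) ∧ g.DerivesIn n₂ γ₂ ρ₁ ∧
        ρ = ρ₁ ++ ρ₂ ∧ n₁ < n ∧ n₂ < n := by
  induction n using Nat.strong_induction_on generalizing A ρ with
  | _ n ih =>
  rcases h.cases_nonterminal with ⟨-, hv⟩ | ⟨r₀, hr₀, rfl, m, rfl, hd⟩
  · exact .inl (by simpa [eq_comm] using hv)
  right
  obtain ⟨γ₁, s, γ₂, ρ₁, ρ₂, m₀, m₁, m₂, hsplit, h₀, hs, h₂, rfl, hm⟩ := hd.exists_first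
  have corner_here (hsx : s = x) (hρ₁ : ρ₁ = []) : ∃ r ∈ g.rules, ∃ γ₁ γ₂ ρ₁' ρ₂' n₁ n₂,
      r.output = γ₁ ++ x :: γ₂ ∧ g.Derives γ₁ [] ∧
      g.DerivesIn n₁ [nonterminal r₀.input] (nonterminal r.input :: ρ₂') ∧
      g.DerivesIn n₂ γ₂ ρ₁' ∧ ρ₁ ++ ρ₂ = ρ₁' ++ ρ₂' ∧ n₁ < m + 1 ∧ n₂ < m + 1 :=
    ⟨r₀, hr₀, γ₁, γ₂, ρ₂, [], 0, m₂, hsx ▸ hsplit, h₀.derives, rfl, h₂, by simp [hρ₁],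
      by omega, by omega⟩
  cases s with
  | terminal c =>
    obtain ⟨rfl, rfl⟩ := List.cons_eq_cons.mp hs.eq_of_terminal
    exact corner_here rfl rfl
  | nonterminal Y =>
    rcases ih m₁ (by omega) hs with ⟨rfl, rfl⟩ |
      ⟨r, hr, δ₁, δ₂, σ₁, σ₂, k₁, k₂, hout, hδ₁, hk₁, hk₂, rfl, hlt₁, hlt₂⟩
    · exact corner_here rfl rfl
    refine ⟨r, hr, δ₁, δ₂, σ₁, σ₂ ++ ρ₂, 1 + (m₀ + (k₁ + m₂)), k₂, hout, hδ₁, ?_, hk₂,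
      by simp, by omega, by omega⟩
    have hstep : g.DerivesIn 1 [nonterminal r₀.input] r₀.output :=
      ⟨r₀.output, ⟨r₀, hr₀, .input_output⟩, rfl⟩
    have hrest := h₀.append (DerivesIn.append (u := [nonterminal Y]) hk₁ h₂)
    rw [List.singleton_append, ← hsplit, List.nil_append, List.cons_append] at hrest
    exact hstep.trans hrest

lemma derives_of_corner {A : g.NT} {r : ContextFreeRule T g.NT} (hr : r ∈ g.rules)
    {γ₁ γ₂ σ τ : List (Symbol T g.NT)} {x : Symbol T g.NT} (hout : r.output = γ₁ ++ x :: γ₂)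
    (h₁ : g.Derives γ₁ []) (h₂ : g.Derives γ₂ σ)
    (hA : g.Derives [nonterminal A] (nonterminal r.input :: τ)) :
    g.Derives [nonterminal A] (x :: (σ ++ τ)) := by
  have hstep : g.Produces (nonterminal r.input :: τ) (r.output ++ τ) := ⟨r, hr, .head τ⟩
  refine hA.trans (hstep.trans_derives ?_)
  simpa [hout] using h₁.append ((Derives.refl [x]).append (h₂.append (Derives.refl τ)))

end Derivations

section Symbols

variable {T : Type*} (g : ContextFreeGrammar T)

def symbols : Set (Symbol T g.NT) :=
  insert (nonterminal g.initial) {s | ∃ r ∈ g.rules, s = nonterminal r.input ∨ s ∈ r.output}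

lemma finite_symbols : g.symbols.Finite := by
  refine ((g.rules.finite_toSet.biUnion fun r _ =>
    (r.output.finite_toSet.insert (nonterminal r.input))).insert (nonterminal g.initial)).subset ?_
  rintro s (rfl | ⟨r, hr, hs⟩)
  · exact Set.mem_insert _ _
  · refine Set.mem_insert_of_mem _ (Set.mem_biUnion hr ?_)
    rcases hs with rfl | hs
    · exact Set.mem_insert _ _
    · exact Set.mem_insert_of_mem _ hs

variable {g}

lemma initial_mem_symbols : nonterminal g.initial ∈ g.symbols := Set.mem_insert _ _

lemma input_mem_symbols {r : ContextFreeRule T g.NT} (hr : r ∈ g.rules) :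
    nonterminal r.input ∈ g.symbols :=
  Set.mem_insert_of_mem _ ⟨r, hr, .inl rfl⟩

lemma output_subset_symbols {r : ContextFreeRule T g.NT} (hr : r ∈ g.rules) :
    ∀ s ∈ r.output, s ∈ g.symbols :=
  fun _ hs => Set.mem_insert_of_mem _ ⟨r, hr, .inr hs⟩

lemma Derives.subset_symbols {u v : List (Symbol T g.NT)} (h : g.Derives u v)
    (hu : ∀ s ∈ u, s ∈ g.symbols) : ∀ s ∈ v, s ∈ g.symbols := by
  induction h with
  | refl => exact hu
  | tail _ hp ih =>
    obtain ⟨r, hr, hrw⟩ := hp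
    obtain ⟨p, q, rfl, rfl⟩ := hrw.exists_parts
    intro s hs
    simp only [List.mem_append] at hs ih
    rcases hs with (hs | hs) | hs
    · exact ih s (.inl (.inl hs))
    · exact output_subset_symbols hr s hs
    · exact ih s (.inr hs)

end Symbols

lemma finite_setOf_rule {T N : Type*} {I : Set N} {S : Set (Symbol T N)} (hI : I.Finite)
    (hS : S.Finite) (n : ℕ) :
    {r : ContextFreeRule T N | r.input ∈ I ∧ r.output.length ≤ n ∧ ∀ s ∈ r.output, s ∈ S}.Finite := by
  have := hS.to_subtype
  refine ((hI.prod (List.finite_length_le S n)).image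
    fun p => (⟨p.1, p.2.map Subtype.val⟩ : ContextFreeRule T N)).subset ?_
  rintro ⟨A, o⟩ ⟨hA, hlen, ho⟩
  lift o to List S using ho
  exact ⟨(A, o), ⟨hA, by simpa using hlen⟩, rfl⟩

inductive GNFVar (N T : Type) where
  | start
  | word (s : Symbol T N)
  | after (A : N) (x : Symbol T N)

section GNF

variable {T : Type} (g : ContextFreeGrammar T)

def GNFVar.Denotes : GNFVar g.NT T → List T → Prop
  | .start, w => g.Derives [nonterminal g.initial] (w.map terminal)
  | .word s, w => w ≠ [] ∧ g.Derives [s] (w.map terminal)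
  | .after A x, w => w ≠ [] ∧ g.Derives [nonterminal A] (x :: w.map terminal)

/-- The variables that may occur on right-hand sides. -/
def GNFVar.IsOver : GNFVar g.NT T → Prop
  | .start => False
  | .word s => s ∈ g.symbols
  | .after A x => nonterminal A ∈ g.symbols ∧ x ∈ g.symbols

inductive Encodes : List (Symbol T g.NT) → List (GNFVar g.NT T) → Prop
  | nil : Encodes [] []
  | cons {s γ ns} : Encodes γ ns → Encodes (s :: γ) (.word s :: ns)
  | erase {s γ ns} : g.Derives [s] [] → Encodes γ ns → Encodes (s :: γ) ns

inductive WordRule : Symbol T g.NT → T → List (GNFVar g.NT T) → Prop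
  | single {s c} : s ∈ g.symbols → g.Derives [s] [terminal c] → WordRule s c []
  | after {B c} : nonterminal B ∈ g.symbols → terminal c ∈ g.symbols →
      WordRule (nonterminal B) c [.after B (terminal c)]

inductive HeadEncodes : List (Symbol T g.NT) → T → List (GNFVar g.NT T) → Prop
  | erase {s γ c ns} : g.Derives [s] [] → HeadEncodes γ c ns → HeadEncodes (s :: γ) c ns
  | head {s γ c ns₀ ns} : g.WordRule s c ns₀ → g.Encodes γ ns → HeadEncodes (s :: γ) c (ns₀ ++ ns)

inductive Continues (A X : g.NT) : List (GNFVar g.NT T) → Prop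
  | after : Continues A X [.after A (nonterminal X)]
  | unit : g.Derives [nonterminal A] [nonterminal X] → Continues A X []

/-- In `after`, the leftmost path of a derivation `A ⇒* x w` is cut at the rule `r` that
produces `x`: the word `w` starts with what the part `γ₂` of `r` right of `x` derives, and
continues with what the rest of the derivation, from `A` down to `r.input`, adds. When `γ₂`
derives nothing, `after_unit` passes to `after A r.input` instead. -/
inductive GNFRule : ContextFreeRule T (GNFVar g.NT T) → Prop
  | start_nil : g.Derives [nonterminal g.initial] [] → GNFRule ⟨.start, []⟩
  | start_word {o} : GNFRule ⟨.word (nonterminal g.initial), o⟩ → GNFRule ⟨.start, o⟩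
  | word {s c ns} : g.WordRule s c ns → GNFRule ⟨.word s, terminal c :: ns.map nonterminal⟩
  | after {A x r γ₁ γ₂ c ns k} : nonterminal A ∈ g.symbols → r ∈ g.rules →
      r.output = γ₁ ++ x :: γ₂ → g.Derives γ₁ [] → g.HeadEncodes γ₂ c ns →
      g.Continues A r.input k → GNFRule ⟨.after A x, terminal c :: (ns ++ k).map nonterminal⟩
  | after_unit {A X x o} : g.Derives [nonterminal X] [x] →
      GNFRule ⟨.after A (nonterminal X), o⟩ → GNFRule ⟨.after A x, o⟩

lemma finite_setOf_isOver : {v : GNFVar g.NT T | v.IsOver g}.Finite := by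
  refine ((g.finite_symbols.image GNFVar.word).union
    (((g.finite_symbols.preimage (fun _ _ _ _ h => Symbol.nonterminal.inj h)).image2
      GNFVar.after g.finite_symbols))).subset ?_
  rintro (_ | s | ⟨A, x⟩) hv
  · exact hv.elim
  · exact .inl ⟨s, hv, rfl⟩
  · exact .inr ⟨A, hv.1, x, hv.2, rfl⟩

def IsOverSymbol : Symbol T (GNFVar g.NT T) → Prop
  | terminal a => terminal a ∈ g.symbols
  | nonterminal v => v.IsOver g

lemma finite_setOf_isOverSymbol : {s | g.IsOverSymbol s}.Finite := by
  refine (((g.finite_symbols.preimage (fun _ _ _ _ h => Symbol.terminal.inj h)).image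
    terminal).union ((g.finite_setOf_isOver).image nonterminal)).subset ?_
  rintro (a | v) hs
  · exact .inl ⟨a, hs, rfl⟩
  · exact .inr ⟨v, hs, rfl⟩

variable {g}

lemma Encodes.bounded {γ : List (Symbol T g.NT)} {ns : List (GNFVar g.NT T)}
    (h : g.Encodes γ ns) (hγ : ∀ s ∈ γ, s ∈ g.symbols) :
    ns.length ≤ γ.length ∧ ∀ v ∈ ns, v.IsOver g := by
  induction h with
  | nil => simp
  | cons _ ih =>
    obtain ⟨hlen, hns⟩ := ih fun s hs => hγ s (.tail _ hs)
    exact ⟨by simpa using hlen, by simpa [GNFVar.IsOver, hγ] using hns⟩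
  | erase _ _ ih =>
    obtain ⟨hlen, hns⟩ := ih fun s hs => hγ s (.tail _ hs)
    exact ⟨by simp; omega, hns⟩

lemma WordRule.bounded {s : Symbol T g.NT} {c : T} {ns : List (GNFVar g.NT T)}
    (h : g.WordRule s c ns) : terminal c ∈ g.symbols ∧ ns.length ≤ 1 ∧ ∀ v ∈ ns, v.IsOver g := by
  cases h with
  | single hs hd => exact ⟨hd.subset_symbols (by simpa using hs) _ (by simp), by simp, by simp⟩
  | after hB hc => exact ⟨hc, by simp, by simpa [GNFVar.IsOver] using ⟨hB, hc⟩⟩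

lemma HeadEncodes.bounded {γ : List (Symbol T g.NT)} {c : T} {ns : List (GNFVar g.NT T)}
    (h : g.HeadEncodes γ c ns) (hγ : ∀ s ∈ γ, s ∈ g.symbols) :
    terminal c ∈ g.symbols ∧ ns.length ≤ γ.length ∧ ∀ v ∈ ns, v.IsOver g := by
  induction h with
  | erase _ _ ih =>
    obtain ⟨hc, hlen, hns⟩ := ih fun s hs => hγ s (.tail _ hs)
    exact ⟨hc, by simp; omega, hns⟩
  | head hw he =>
    obtain ⟨hc, hlen₀, hns₀⟩ := hw.bounded
    obtain ⟨hlen, hns⟩ := he.bounded fun s hs => hγ s (.tail _ hs)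
    refine ⟨hc, by simp; omega, fun v hv => ?_⟩
    rcases List.mem_append.mp hv with hv | hv
    · exact hns₀ v hv
    · exact hns v hv

lemma GNFRule.bounded {r : ContextFreeRule T (GNFVar g.NT T)} (h : g.GNFRule r) :
    (r.input = .start ∨ r.input.IsOver g) ∧
      r.output.length ≤ g.rules.sup (fun r => r.output.length) + 2 ∧
      ∀ s ∈ r.output, g.IsOverSymbol s := by
  induction h with
  | start_nil => simp
  | start_word _ ih => exact ⟨.inl rfl, ih.2⟩
  | word hw =>
    obtain ⟨hc, hlen, hns⟩ := hw.bounded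
    refine ⟨.inr ?_, by simp; omega, ?_⟩
    · cases hw with
      | single hs => exact hs
      | after hB => exact hB
    · simpa [IsOverSymbol, hc] using hns
  | @after A x r γ₁ γ₂ c ns k hA hr hout _ he hk =>
    have hγ : ∀ s ∈ r.output, s ∈ g.symbols := output_subset_symbols hr
    obtain ⟨hc, hlen, hns⟩ := he.bounded fun s hs => hγ s (by simp [hout, hs])
    have hkv : k.length ≤ 1 ∧ ∀ v ∈ k, v.IsOver g := by
      cases hk with
      | after => exact ⟨by simp, by simpa [GNFVar.IsOver] using ⟨hA, input_mem_symbols hr⟩⟩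
      | unit => simp
    have hr_len : r.output.length ≤ g.rules.sup (fun r => r.output.length) :=
      Finset.le_sup (f := fun r => r.output.length) hr
    refine ⟨.inr ⟨hA, hγ x (by simp [hout])⟩, ?_, ?_⟩
    · simp only [hout, List.length_append, List.length_cons] at hr_len
      simp; omega
    · simp only [List.mem_cons, List.mem_map, List.mem_append]
      rintro _ (rfl | ⟨v, hv | hv, rfl⟩)
      exacts [hc, hns v hv, hkv.2 v hv]
  | after_unit hX _ ih =>
    obtain ⟨hin | ⟨hA, hXs⟩, hout⟩ := ih
    · cases hin
    exact ⟨.inr ⟨hA, hX.subset_symbols (by simpa using hXs) _ (by simp)⟩, hout⟩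

variable (g) in
lemma finite_setOf_gnfRule : {r | g.GNFRule r}.Finite :=
  (finite_setOf_rule (g.finite_setOf_isOver.insert .start) g.finite_setOf_isOverSymbol
    (g.rules.sup (fun r => r.output.length) + 2)).subset fun _ hr => hr.bounded

variable (g) in
noncomputable abbrev toGNF : ContextFreeGrammar T :=
  ⟨GNFVar g.NT T, .start, g.finite_setOf_gnfRule.toFinset⟩

lemma mem_toGNF_rules {r : ContextFreeRule T (GNFVar g.NT T)} :
    r ∈ g.toGNF.rules ↔ g.GNFRule r :=
  Set.Finite.mem_toFinset _

variable {ws : List (List T)}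

lemma Encodes.derives {γ : List (Symbol T g.NT)} {ns : List (GNFVar g.NT T)}
    (h : g.Encodes γ ns) (hws : List.Forall₂ (GNFVar.Denotes g) ns ws) :
    g.Derives γ (ws.flatten.map terminal) := by
  induction h generalizing ws with
  | nil => cases hws; rfl
  | cons _ ih =>
    obtain _ | ⟨⟨-, hs⟩, hws⟩ := hws
    simpa using hs.append (ih hws)
  | erase hs _ ih => simpa using hs.append (ih hws)

lemma WordRule.derives {s : Symbol T g.NT} {c : T} {ns : List (GNFVar g.NT T)}
    (h : g.WordRule s c ns) (hws : List.Forall₂ (GNFVar.Denotes g) ns ws) :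
    g.Derives [s] ((c :: ws.flatten).map terminal) := by
  cases h with
  | single _ hs => cases hws; simpa using hs
  | after =>
    obtain _ | ⟨⟨-, hB⟩, _ | _⟩ := hws
    simpa using hB

lemma HeadEncodes.derives {γ : List (Symbol T g.NT)} {c : T} {ns : List (GNFVar g.NT T)}
    (h : g.HeadEncodes γ c ns) (hws : List.Forall₂ (GNFVar.Denotes g) ns ws) :
    g.Derives γ ((c :: ws.flatten).map terminal) := by
  induction h generalizing ws with
  | erase hs _ ih => simpa using hs.append (ih hws)
  | head hw he =>
    obtain ⟨ws₁, ws₂, rfl, h₁, h₂⟩ := hws.append_split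
    simpa using (hw.derives h₁).append (he.derives h₂)

lemma Continues.derives {A X : g.NT} {k : List (GNFVar g.NT T)} (h : g.Continues A X k)
    (hws : List.Forall₂ (GNFVar.Denotes g) k ws) :
    g.Derives [nonterminal A] (nonterminal X :: ws.flatten.map terminal) := by
  cases h with
  | after => obtain _ | ⟨⟨-, hA⟩, _ | _⟩ := hws; simpa using hA
  | unit hA => cases hws; simpa using hA

lemma GNFRule.denotes {r : ContextFreeRule T (GNFVar g.NT T)} (hr : g.GNFRule r) {m : ℕ}
    (hsound : ∀ m' ≤ m, ∀ ν w, g.toGNF.DerivesIn m' [nonterminal ν] (w.map terminal) →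
      ν.Denotes g w)
    {w : List T} (h : g.toGNF.DerivesIn m r.output (w.map terminal)) : r.input.Denotes g w := by
  induction hr generalizing w with
  | start_nil hS =>
    obtain rfl : w = [] := by simpa using h.eq_nil.symm
    exact hS
  | start_word _ ih => exact (ih h).2
  | word hw =>
    obtain ⟨w', rfl, h'⟩ := h.terminal_cons
    obtain ⟨ws, rfl, hws⟩ := h'.exists_forall₂ hsound
    exact ⟨List.cons_ne_nil _ _, hw.derives hws⟩
  | after _ hr hout hγ₁ he hk =>
    obtain ⟨w', rfl, h'⟩ := h.terminal_cons
    obtain ⟨ws, rfl, hws⟩ := h'.exists_forall₂ hsound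
    obtain ⟨ws₁, ws₂, rfl, h₁, h₂⟩ := hws.append_split
    refine ⟨List.cons_ne_nil _ _, ?_⟩
    simpa using derives_of_corner hr hout hγ₁ (he.derives h₁) (hk.derives h₂)
  | after_unit hX _ ih =>
    obtain ⟨hw, hA⟩ := ih h
    exact ⟨hw, hA.trans (by simpa using hX.append_right (w.map terminal))⟩

lemma denotes_of_toGNF_derivesIn (n : ℕ) {ν : GNFVar g.NT T} {w : List T}
    (h : g.toGNF.DerivesIn n [nonterminal ν] (w.map terminal)) : ν.Denotes g w := by
  induction n using Nat.strong_induction_on generalizing ν w with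
  | _ n ih =>
  rcases h.cases_nonterminal with ⟨-, hw⟩ | ⟨r, hr, rfl, m, rfl, hd⟩
  · obtain ⟨a, -, ha⟩ := List.map_eq_singleton_iff.mp hw
    cases ha
  exact (mem_toGNF_rules.mp hr).denotes (fun m' hm' _ _ => ih m' (by omega)) hd

lemma toGNF_derives_of_gnfRule {ν : GNFVar g.NT T} {o w : List (Symbol T (GNFVar g.NT T))}
    (hr : g.GNFRule ⟨ν, o⟩) (h : g.toGNF.Derives o w) : g.toGNF.Derives [nonterminal ν] w :=
  Produces.trans_derives ⟨_, mem_toGNF_rules.mpr hr, .input_output⟩ h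

variable (g) in
def AfterComplete (n : ℕ) : Prop :=
  ∀ A x v, nonterminal A ∈ g.symbols → v ≠ [] →
    g.DerivesIn n [nonterminal A] (x :: v.map terminal) →
    ∃ o, g.GNFRule ⟨.after A x, o⟩ ∧ g.toGNF.Derives o (v.map terminal)

lemma exists_wordRule {m : ℕ} (hC : g.AfterComplete m) {s : Symbol T g.NT} {c : T} {y : List T}
    (hs : s ∈ g.symbols) (h : g.DerivesIn m [s] ((c :: y).map terminal)) :
    ∃ ns, g.WordRule s c ns ∧ g.toGNF.Derives (ns.map nonterminal) (y.map terminal) := by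
  cases y with
  | nil => exact ⟨[], .single hs h.derives, by rfl⟩
  | cons d y =>
    cases s with
    | terminal a => simpa using h.eq_of_terminal
    | nonterminal B =>
      obtain ⟨o, ho, hd⟩ := hC B (terminal c) (d :: y) hs (List.cons_ne_nil _ _) h
      have hc : terminal c ∈ g.symbols :=
        h.derives.subset_symbols (by simpa using hs) _ (by simp)
      exact ⟨[.after B (terminal c)], .after hs hc, by simpa using toGNF_derives_of_gnfRule ho hd⟩

lemma exists_encodes {m : ℕ} (hC : ∀ m' ≤ m, g.AfterComplete m') {γ : List (Symbol T g.NT)}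
    {w : List T} (hγ : ∀ s ∈ γ, s ∈ g.symbols) (h : g.DerivesIn m γ (w.map terminal)) :
    ∃ ns, g.Encodes γ ns ∧ g.toGNF.Derives (ns.map nonterminal) (w.map terminal) := by
  induction γ generalizing m w with
  | nil =>
    obtain rfl : w = [] := by simpa using h.eq_nil
    exact ⟨[], .nil, by rfl⟩
  | cons s γ ih =>
    obtain ⟨m₁, m₂, w₁, w₂, hm, rfl, h₁, h₂⟩ := DerivesIn.terminal_append_split (α := [s]) h
    obtain ⟨ns, hns, hd⟩ :=
      ih (fun m' hm' => hC m' (by omega)) (fun s' hs' => hγ s' (.tail _ hs')) h₂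
    cases w₁ with
    | nil => exact ⟨ns, .erase h₁.derives hns, by simpa using hd⟩
    | cons c y =>
      obtain ⟨ns₀, hw, hd₀⟩ := exists_wordRule (hC m₁ (by omega)) (hγ s (.head _)) h₁
      have hword := toGNF_derives_of_gnfRule (.word hw) ((Derives.refl [terminal c]).append hd₀)
      exact ⟨.word s :: ns, .cons hns, by simpa using hword.append hd⟩

lemma exists_headEncodes {m : ℕ} (hC : ∀ m' ≤ m, g.AfterComplete m')
    {γ : List (Symbol T g.NT)} {c : T} {y : List T} (hγ : ∀ s ∈ γ, s ∈ g.symbols)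
    (h : g.DerivesIn m γ ((c :: y).map terminal)) :
    ∃ ns, g.HeadEncodes γ c ns ∧ g.toGNF.Derives (ns.map nonterminal) (y.map terminal) := by
  induction γ generalizing m y with
  | nil => simpa using h.eq_nil
  | cons s γ ih =>
    obtain ⟨m₁, m₂, w₁, w₂, hm, hw, h₁, h₂⟩ := DerivesIn.terminal_append_split (α := [s]) h
    have hγ' : ∀ s ∈ γ, s ∈ g.symbols := fun s' hs' => hγ s' (.tail _ hs')
    cases w₁ with
    | nil =>
      rw [List.nil_append] at hw
      subst hw
      obtain ⟨ns, hns, hd⟩ := ih (fun m' hm' => hC m' (by omega)) hγ' h₂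
      exact ⟨ns, .erase h₁.derives hns, hd⟩
    | cons c' y₁ =>
      obtain ⟨rfl, rfl⟩ := List.cons_eq_cons.mp hw
      obtain ⟨ns₀, hw₀, hd₀⟩ := exists_wordRule (hC m₁ (by omega)) (hγ s (.head _)) h₁
      obtain ⟨ns, hns, hd⟩ := exists_encodes (fun m' hm' => hC m' (by omega)) hγ' h₂
      exact ⟨ns₀ ++ ns, .head hw₀ hns, by simpa using hd₀.append hd⟩

lemma exists_continues {n : ℕ} (hC : g.AfterComplete n) {A X : g.NT} {v : List T}
    (hA : nonterminal A ∈ g.symbols)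
    (h : g.DerivesIn n [nonterminal A] (nonterminal X :: v.map terminal)) :
    ∃ k, g.Continues A X k ∧ g.toGNF.Derives (k.map nonterminal) (v.map terminal) := by
  cases v with
  | nil => exact ⟨[], .unit h.derives, by rfl⟩
  | cons d v =>
    obtain ⟨o, ho, hd⟩ := hC A (nonterminal X) (d :: v) hA (List.cons_ne_nil _ _) h
    exact ⟨_, .after, by simpa using toGNF_derives_of_gnfRule ho hd⟩

theorem afterComplete (n : ℕ) : g.AfterComplete n := by
  induction n using Nat.strong_induction_on with
  | _ n ih =>
  intro A x v hA hv h
  rcases h.exists_corner with ⟨-, hv'⟩ |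
    ⟨r, hr, γ₁, γ₂, ρ₁, ρ₂, n₁, n₂, hout, hγ₁, hA', h₂, hρ, hn₁, hn₂⟩
  · exact absurd (List.map_eq_nil_iff.mp hv') hv
  obtain ⟨v₁, v₂, rfl, rfl, rfl⟩ := List.map_eq_append_iff.mp hρ
  have hγ₂ : ∀ s ∈ γ₂, s ∈ g.symbols :=
    fun s hs => output_subset_symbols hr s (by simp [hout, hs])
  cases v₁ with
  | nil =>
    obtain ⟨o, ho, hd⟩ := ih n₁ hn₁ A _ v₂ hA (by simpa using hv) hA'
    have hX : g.Derives [nonterminal r.input] [x] :=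
      (Produces.single ⟨r, hr, .input_output⟩).trans
        (by simpa [hout] using hγ₁.append ((Derives.refl [x]).append h₂.derives))
    exact ⟨o, .after_unit hX ho, by simpa using hd⟩
  | cons c y =>
    obtain ⟨ns, he, hd⟩ := exists_headEncodes (fun m' hm' => ih m' (by omega)) hγ₂ h₂
    obtain ⟨k, hk, hdk⟩ := exists_continues (ih n₁ hn₁) hA hA'
    exact ⟨_, .after hA hr hout hγ₁ he hk,
      by simpa using (Derives.refl [terminal c]).append (hd.append hdk)⟩

variable (g) in
theorem language_toGNF : g.toGNF.language = g.language := by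
  ext w
  rw [mem_language_iff, mem_language_iff]
  refine ⟨fun h => ?_, fun h => ?_⟩
  · obtain ⟨n, hn⟩ := derives_iff_exists_derivesIn.mp h
    exact denotes_of_toGNF_derivesIn n hn
  · obtain ⟨n, hn⟩ := derives_iff_exists_derivesIn.mp h
    cases w with
    | nil => exact toGNF_derives_of_gnfRule (.start_nil h) (by rfl)
    | cons c y =>
      obtain ⟨ns, hw, hd⟩ := exists_wordRule (afterComplete n) initial_mem_symbols hn
      exact toGNF_derives_of_gnfRule (.start_word (.word hw))
        (by simpa using (Derives.refl [terminal c]).append hd)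

lemma GNFRule.shape {r : ContextFreeRule T (GNFVar g.NT T)} (h : g.GNFRule r) :
    (r.input = .start ∧ r.output = []) ∨
      ∃ (c : T) (δ : List (GNFVar g.NT T)), r.output = terminal c :: δ.map nonterminal := by
  induction h with
  | start_nil => exact .inl ⟨rfl, rfl⟩
  | start_word _ ih => exact .inr (ih.resolve_left (by simp))
  | word => exact .inr ⟨_, _, rfl⟩
  | @after A x r γ₁ γ₂ c ns k => exact .inr ⟨c, ns ++ k, rfl⟩
  | after_unit _ _ ih => exact .inr (ih.resolve_left (by simp))

end GNF

section TwoGNF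

variable {T : Type}

def IsGNF (g : ContextFreeGrammar T) : Prop :=
  ∀ r ∈ g.rules, (r.input = g.initial ∧ r.output = []) ∨
    ∃ (a : T) (δ : List g.NT), r.output = terminal a :: δ.map nonterminal ∧ g.initial ∉ δ

theorem isGNF_toGNF (g : ContextFreeGrammar T) : g.toGNF.IsGNF := by
  intro r hr
  have hr := mem_toGNF_rules.mp hr
  refine hr.shape.imp id fun ⟨c, δ, hout⟩ => ⟨c, δ, hout, fun hδ => ?_⟩
  exact hr.bounded.2.2 (nonterminal .start) (by simp [hout, hδ])

variable {k : ContextFreeGrammar T}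

lemma IsGNF.initial_not_mem_output (hk : k.IsGNF) {r : ContextFreeRule T k.NT}
    (hr : r ∈ k.rules) : nonterminal k.initial ∉ r.output := by
  rcases hk r hr with ⟨-, hout⟩ | ⟨a, δ, hout, hδ⟩ <;> simp [*]

variable (k) in
inductive TwoGNFRule : ContextFreeRule T k.NT → Prop
  | keep {r} : r ∈ k.rules → r.output.length ≤ 1 → TwoGNFRule r
  | subst {r r₂ a δ} : r ∈ k.rules → r₂ ∈ k.rules →
      r.output = terminal a :: nonterminal r₂.input :: δ →
      TwoGNFRule ⟨r.input, terminal a :: r₂.output ++ δ⟩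

variable (k) in
lemma finite_setOf_twoGNFRule : {r | k.TwoGNFRule r}.Finite := by
  refine (k.rules.finite_toSet.union (k.rules.finite_toSet.image2
    (fun r r₂ => ⟨r.input, r.output.take 1 ++ r₂.output ++ r.output.drop 2⟩)
    k.rules.finite_toSet)).subset ?_
  rintro _ (⟨hr, -⟩ | ⟨hr, hr₂, hout⟩)
  · exact .inl hr
  · exact .inr ⟨_, hr, _, hr₂, by simp [hout]⟩

variable (k) in
noncomputable abbrev toTwoGNF : ContextFreeGrammar T :=
  ⟨k.NT, k.initial, k.finite_setOf_twoGNFRule.toFinset⟩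

lemma mem_toTwoGNF_rules {r : ContextFreeRule T k.NT} : r ∈ k.toTwoGNF.rules ↔ k.TwoGNFRule r :=
  Set.Finite.mem_toFinset _

theorem IsGNF.inTwoGNF_toTwoGNF (hk : k.IsGNF) : k.toTwoGNF.InTwoGNF := by
  constructor
  · intro (r : ContextFreeRule T k.NT) hmem
    cases mem_toTwoGNF_rules.mp hmem with
    | keep hr => exact hk.initial_not_mem_output hr
    | @subst _ _ _ _ hr hr₂ hout =>
      have := hk.initial_not_mem_output hr
      have := hk.initial_not_mem_output hr₂
      simp_all
  · intro (r : ContextFreeRule T k.NT) hmem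
    cases mem_toTwoGNF_rules.mp hmem with
    | keep hr hlen =>
      rcases hk r hr with h | ⟨a, δ, hout, -⟩
      · exact .inl h
      · obtain rfl : δ = [] := by simpa [hout] using hlen
        exact .inr (.inl ⟨a, hout⟩)
    | @subst r₁ r₂ a δ hr hr₂ hout =>
      have hB : r₂.input ≠ k.initial := fun hB =>
        hk.initial_not_mem_output hr (by simp [hout, hB])
      obtain ⟨b, δ₂, hout₂, -⟩ := (hk r₂ hr₂).resolve_left (fun h => hB h.1)
      obtain ⟨δ₁, rfl⟩ : ∃ δ₁ : List k.NT, δ = δ₁.map nonterminal := by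
        obtain ⟨-, hnil⟩ | ⟨a', δ', hout', -⟩ := hk r₁ hr
        · simp [hnil] at hout
        · rw [hout'] at hout
          obtain ⟨-, hδ'⟩ := List.cons_eq_cons.mp hout
          obtain ⟨_, δ₁, -, -, hδ₁⟩ := List.map_eq_cons_iff.mp hδ'
          exact ⟨δ₁, hδ₁.symm⟩
      exact .inr (.inr ⟨a, b, δ₂ ++ δ₁, by simp [hout₂]⟩)

lemma TwoGNFRule.derives {r : ContextFreeRule T k.NT} (h : k.TwoGNFRule r) :
    k.Derives [nonterminal r.input] r.output := by
  cases h with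
  | keep hr => exact Produces.single ⟨_, hr, .input_output⟩
  | @subst r r₂ a δ hr hr₂ hout =>
    refine (Produces.single ⟨r, hr, .input_output⟩).trans ?_
    rw [hout]
    simpa using (Produces.single ⟨r₂, hr₂, .input_output⟩).append_left [terminal a]
      |>.append_right δ

lemma IsGNF.toTwoGNF_derives_of_derivesIn (hk : k.IsGNF) (n : ℕ) {A : k.NT} {w : List T}
    (h : k.DerivesIn n [nonterminal A] (w.map terminal)) :
    k.toTwoGNF.Derives [nonterminal A] (w.map terminal) := by
  induction n using Nat.strong_induction_on generalizing A w with
  | _ n ih =>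
  rcases h.cases_nonterminal with ⟨-, hw⟩ | ⟨r, hr, rfl, m, rfl, hd⟩
  · obtain ⟨a, -, ha⟩ := List.map_eq_singleton_iff.mp hw
    cases ha
  have hrule {r'} (h : k.TwoGNFRule r') : k.toTwoGNF.Produces [nonterminal r'.input] r'.output :=
    ⟨_, mem_toTwoGNF_rules.mpr h, .input_output⟩
  rcases hk r hr with ⟨-, hout⟩ | ⟨a, _ | ⟨B, δ⟩, hout, hδ⟩
  · have hkeep := (hrule (.keep hr (by simp [hout]))).single
    rw [hout] at hd hkeep
    rwa [hd.eq_nil]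
  · replace hout : r.output = [terminal a] := by simpa using hout
    rw [hout] at hd
    rw [hd.eq_of_terminal, ← hout]
    exact (hrule (.keep hr (by simp [hout]))).single
  obtain ⟨w', rfl, hd'⟩ := (hout ▸ hd).terminal_cons
  obtain ⟨m₁, m₂, u, u₂, hm, rfl, h₁, h₂⟩ :=
    DerivesIn.terminal_append_split (α := [nonterminal B]) (by simpa using hd')
  rcases h₁.cases_nonterminal with ⟨-, hu⟩ | ⟨r₂, hr₂, rfl, m₁, rfl, hd₂⟩
  · obtain ⟨a, -, ha⟩ := List.map_eq_singleton_iff.mp hu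
    cases ha
  have hB : r₂.input ≠ k.initial := fun hB => hδ (by simp [hB])
  obtain ⟨b, δ', hout₂, -⟩ := (hk r₂ hr₂).resolve_left fun h => hB h.1
  obtain ⟨u', rfl, hd₂'⟩ := (hout₂ ▸ hd₂).terminal_cons
  obtain ⟨ws, hws, hf⟩ := DerivesIn.exists_forall₂ (g := k) (n := m₁ + m₂) (ns := δ' ++ δ) (w := u' ++ u₂)
    (P := fun A w => k.toTwoGNF.Derives [nonterminal A] (w.map terminal))
    (fun m' hm' A w h => ih m' (by omega) h) (by simpa using hd₂'.append h₂)
  refine (hrule (.subst (a := a) (δ := δ.map nonterminal) hr hr₂ (by simp [hout]))).trans_derives ?_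
  simpa [hout₂, hws] using
    (Derives.refl [terminal a, terminal b]).append (derives_of_forall₂ (g := k.toTwoGNF) hf)

theorem IsGNF.language_toTwoGNF (hk : k.IsGNF) : k.toTwoGNF.language = k.language := by
  ext w
  rw [mem_language_iff, mem_language_iff]
  refine ⟨derives_of_rules_derivable (g := k) fun r hr => (mem_toTwoGNF_rules.mp hr).derives, fun h => ?_⟩
  obtain ⟨n, hn⟩ := derives_iff_exists_derivesIn.mp h
  exact hk.toTwoGNF_derives_of_derivesIn n hn

end TwoGNF

end ContextFreeGrammar

/-- For every context-free grammar `G`, there exists an equivalent context-free grammar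
(generating the same language) in 2-Greibach normal form. -/
theorem exists_equivalent_twoGNF {T : Type} (G : ContextFreeGrammar T) :
    ∃ G' : ContextFreeGrammar T, G'.language = G.language ∧ G'.InTwoGNF :=
  ⟨G.toGNF.toTwoGNF, by rw [G.isGNF_toGNF.language_toTwoGNF, G.language_toGNF],
    G.isGNF_toGNF.inTwoGNF_toTwoGNF⟩
end

section
/- Under the time-varying weighted restricted PDA semantics, the inner weights γ defined by Lang's-algorithm recurrence are correct: for all 0 ≤ i < t and all states q, r ∈ Q and stack symbols x, y ∈ Γ, γ[i→t][q,x→r,y] equals the total weight of all push computations over timesteps i+1, …, t from (i, q, x) to (t, r, y). -/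
/-- An operation of a restricted (restricted-form) PDA with states `Q` and stack alphabet `Γ`:
`push q x r y` has left-hand side `q, x` and pushes `y` on top of `x` while moving to state
`r`; `repl q x r y` replaces the top symbol `x` by `y`; `pop q x r` pops the top symbol `x`. -/
inductive Op (Q Γ : Type) where
  | push (q : Q) (x : Γ) (r : Q) (y : Γ)
  | repl (q : Q) (x : Γ) (r : Q) (y : Γ)
  | pop (q : Q) (x : Γ) (r : Q)
  deriving DecidableEq

/-- `OpStep c o c'` : the operation `o` is applicable to configuration `c` (its left-hand
side state is the current state and its left-hand side stack symbol is the current top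
symbol, the stack being nonempty) and produces configuration `c'`.  Stacks are lists whose
head is the top of the stack. -/
inductive OpStep {Q Γ : Type} : Q × List Γ → Op Q Γ → Q × List Γ → Prop
  | push (q : Q) (x : Γ) (r : Q) (y : Γ) (β : List Γ) :
      OpStep (q, x :: β) (Op.push q x r y) (r, y :: x :: β)
  | repl (q : Q) (x : Γ) (r : Q) (y : Γ) (β : List Γ) :
      OpStep (q, x :: β) (Op.repl q x r y) (r, y :: β)
  | pop (q : Q) (x : Γ) (r : Q) (β : List Γ) :
      OpStep (q, x :: β) (Op.pop q x r) (r, β)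

/-- `RunFrom c π c'` : the sequence of operations `π`, applied successively starting from
configuration `c`, is applicable at each step and ends in configuration `c'`. -/
inductive RunFrom {Q Γ : Type} : Q × List Γ → List (Op Q Γ) → Q × List Γ → Prop
  | nil (c : Q × List Γ) : RunFrom c [] c
  | cons {c c' c'' : Q × List Γ} {o : Op Q Γ} {π : List (Op Q Γ)} :
      OpStep c o c' → RunFrom c' π c'' → RunFrom c (o :: π) c''

/-- Given time-varying operation weights `Δ`, the weight of a run `π` whose first operation
happens at timestep `k` is the product of the weights of its operations at their respective
timesteps. -/
def runWeight {Q Γ : Type} (Δ : ℕ → Op Q Γ → ℝ) : ℕ → List (Op Q Γ) → ℝ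
  | _, [] => 1
  | k, o :: π => Δ k o * runWeight Δ (k + 1) π

/-- Table of the inner weights `γ` of Lang's algorithm, with indices shifted by one:
`gamTable q₀ bot Δ t t' I q x r y` equals (for `t' ≤ t` and `I ≤ t'`) the inner weight
`γ[i → t'][q,x → r,y]` where `i = I - 1` (so `I = 0` represents `i = -1`).  It is defined by
the recurrence
`γ[-1→0][q,x→r,y] = 1` if `(q,x,r,y) = (q₀,⊥,q₀,⊥)` and `0` otherwise, and for `t ≥ 1`,
`γ[i→t] = 1{i = t-1}·Δ_t[q,x→r,xy] + Σ_{s,z} γ[i→t-1][q,x→s,z]·Δ_t[s,z→r,y]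
        + Σ_{k=i+1}^{t-2} Σ_u γ[i→k][q,x→u,y]·γ'[k][u,y→t,r]`,
where `γ'[k][u,y→t,r] = Σ_{s,z} γ[k→t-1][u,y→s,z]·Δ_t[s,z→r,ε]`. -/
def gamTable {Q Γ : Type} [Fintype Q] [Fintype Γ] [DecidableEq Q] [DecidableEq Γ]
    (q₀ : Q) (bot : Γ) (Δ : ℕ → Op Q Γ → ℝ) : ℕ → ℕ → ℕ → Q → Γ → Q → Γ → ℝ
  | 0 => fun t' I q x r y =>
      if t' = 0 ∧ I = 0 ∧ q = q₀ ∧ x = bot ∧ r = q₀ ∧ y = bot then 1 else 0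
  | t + 1 => fun t' I q x r y =>
      if t' = t + 1 then
        (if I = t + 1 then Δ (t + 1) (Op.push q x r y) else 0)
        + (∑ s : Q, ∑ z : Γ,
            gamTable q₀ bot Δ t t I q x s z * Δ (t + 1) (Op.repl s z r y))
        + ∑ k ∈ Finset.Ico I t, ∑ u : Q,
            gamTable q₀ bot Δ t k I q x u y *
              (∑ s : Q, ∑ z : Γ,
                gamTable q₀ bot Δ t t (k + 1) u y s z * Δ (t + 1) (Op.pop s z r))
      else gamTable q₀ bot Δ t t' I q x r y

/-- The inner weights `γ` with shifted lower index: `gam q₀ bot Δ t I q x r y` is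
`γ[(I-1) → t][q,x → r,y]` (so `I = 0` represents the lower index `i = -1`). -/
def gam {Q Γ : Type} [Fintype Q] [Fintype Γ] [DecidableEq Q] [DecidableEq Γ]
    (q₀ : Q) (bot : Γ) (Δ : ℕ → Op Q Γ → ℝ) (t I : ℕ) : Q → Γ → Q → Γ → ℝ :=
  gamTable q₀ bot Δ t t I

/-- `IsPushComp π q x r y` : the operation sequence `π` is a *push computation* from
`(q, x)` to `(r, y)`: applied starting in state `q` from any stack `β·x` with top symbol
`x`, it ends in state `r` with stack `β·x·y` (the original stack unchanged with the single
symbol `y` newly on top), and at every strictly intermediate configuration the stack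
properly extends `β·x`. -/
def IsPushComp {Q Γ : Type} (π : List (Op Q Γ)) (q : Q) (x : Γ) (r : Q) (y : Γ) : Prop :=
  ∀ β : List Γ,
    RunFrom (q, x :: β) π (r, y :: x :: β) ∧
    ∀ (pre suf : List (Op Q Γ)) (c : Q × List Γ),
      π = pre ++ suf → pre ≠ [] → suf ≠ [] → RunFrom (q, x :: β) pre c →
        ∃ γ' : List Γ, γ' ≠ [] ∧ c.2 = γ' ++ x :: β

/-!
A push computation from `(q, x)` to `(r, y)` never reads its initial top symbol `x` again, nor
anything below it, so it is the same thing as a run from the one-symbol stack `[x]` that stays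
strictly above `[x]`, replayed over an arbitrary stack. Its last operation is then a push (and the
computation has length one), a replacement `s, z → r, y` ending a push computation to `(s, z)`, or a
pop `s, z → r`. In the last case the run is cut at the last moment the stack has height two, say in
state `u`: the top symbol there must be `y`, and the two pieces are push computations to `(u, y)`
and from `(u, y)` to `(s, z)`. This cut is unique, so the total weights of push computations satisfy
the recurrence defining `γ`, and the two agree by strong induction on `t`.
-/

section Runs

variable {Q Γ : Type}

theorem OpStep.deterministic {c c₁ c₂ : Q × List Γ} {o : Op Q Γ}
    (h₁ : OpStep c o c₁) (h₂ : OpStep c o c₂) : c₁ = c₂ := by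
  cases h₁ <;> cases h₂ <;> rfl

theorem RunFrom.deterministic {c c₁ c₂ : Q × List Γ} {π : List (Op Q Γ)}
    (h₁ : RunFrom c π c₁) (h₂ : RunFrom c π c₂) : c₁ = c₂ := by
  induction h₁ with
  | nil => cases h₂; rfl
  | cons hs _ ih =>
    cases h₂ with
    | cons hs' hr' => exact ih (hs'.deterministic hs ▸ hr')

theorem OpStep.append_stack {c c' : Q × List Γ} {o : Op Q Γ} (h : OpStep c o c')
    (ρ : List Γ) : OpStep (c.1, c.2 ++ ρ) o (c'.1, c'.2 ++ ρ) := by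
  cases h
  · exact .push _ _ _ _ _
  · exact .repl _ _ _ _ _
  · exact .pop _ _ _ _

theorem OpStep.of_append_stack {q : Q} {σ ρ : List Γ} {o : Op Q Γ} {c : Q × List Γ}
    (h : OpStep (q, σ ++ ρ) o c) (hσ : σ ≠ []) :
    ∃ σ', c.2 = σ' ++ ρ ∧ OpStep (q, σ) o (c.1, σ') := by
  obtain ⟨a, σ, rfl⟩ := List.exists_cons_of_ne_nil hσ
  cases h
  · exact ⟨_, rfl, .push _ _ _ _ _⟩
  · exact ⟨_, rfl, .repl _ _ _ _ _⟩
  · exact ⟨_, rfl, .pop _ _ _ _⟩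

theorem OpStep.eq_cons_of_length_lt {c c' : Q × List Γ} {o : Op Q Γ} (h : OpStep c o c')
    (hlt : c.2.length < c'.2.length) : ∃ v, c'.2 = v :: c.2 := by
  cases h
  · exact ⟨_, rfl⟩
  all_goals simp at hlt

end Runs

section RunAbove

variable {Q Γ : Type}

inductive RunAbove (τ : List Γ) : Q × List Γ → List (Op Q Γ) → Q × List Γ → Prop
  | nil (c : Q × List Γ) : RunAbove τ c [] c
  | cons {c : Q × List Γ} {o : Op Q Γ} {q : Q} {δ : List Γ} {π : List (Op Q Γ)}
      {c' : Q × List Γ} :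
      OpStep c o (q, δ ++ τ) → δ ≠ [] → RunAbove τ (q, δ ++ τ) π c' → RunAbove τ c (o :: π) c'

variable {τ : List Γ} {c c' : Q × List Γ} {π : List (Op Q Γ)}

theorem RunAbove.runFrom (h : RunAbove τ c π c') : RunFrom c π c' := by
  induction h with
  | nil c => exact .nil c
  | cons hs _ _ ih => exact .cons hs ih

theorem RunAbove.eq_of_nil (h : RunAbove τ c [] c') : c' = c := by
  cases h; rfl

theorem RunAbove.exists_stack_eq (h : RunAbove τ c π c') (hπ : π ≠ []) :
    ∃ δ, δ ≠ [] ∧ c'.2 = δ ++ τ := by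
  induction h with
  | nil => exact absurd rfl hπ
  | @cons _ _ _ δ π _ _ hδ hr ih =>
    rcases eq_or_ne π [] with rfl | hπ'
    · cases hr; exact ⟨δ, hδ, rfl⟩
    · exact ih hπ'

theorem runAbove_append {π₁ π₂ : List (Op Q Γ)} {c₂ : Q × List Γ} :
    RunAbove τ c (π₁ ++ π₂) c₂ ↔ ∃ c₁, RunAbove τ c π₁ c₁ ∧ RunAbove τ c₁ π₂ c₂ := by
  induction π₁ generalizing c with
  | nil => exact ⟨fun h => ⟨c, .nil c, h⟩, fun ⟨_, h₁, h₂⟩ => by cases h₁; exact h₂⟩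
  | cons o π₁ ih =>
    constructor
    · rintro (_ | ⟨hs, hδ, hr⟩)
      obtain ⟨c₁, h₁, h₂⟩ := ih.mp hr
      exact ⟨c₁, .cons hs hδ h₁, h₂⟩
    · rintro ⟨c₁, _ | ⟨hs, hδ, hr⟩, h₂⟩
      exact .cons hs hδ (ih.mpr ⟨c₁, hr, h₂⟩)

theorem runAbove_singleton {o : Op Q Γ} :
    RunAbove τ c [o] c' ↔ OpStep c o c' ∧ ∃ δ, δ ≠ [] ∧ c'.2 = δ ++ τ := by
  constructor
  · rintro (_ | ⟨hs, hδ, _ | _⟩)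
    exact ⟨hs, _, hδ, rfl⟩
  · rintro ⟨hs, δ, hδ, hc'⟩
    obtain ⟨q', σ'⟩ := c'
    subst hc'
    exact .cons hs hδ (.nil _)

theorem RunAbove.of_base_append {τ' : List Γ} (h : RunAbove (τ' ++ τ) c π c') :
    RunAbove τ c π c' := by
  induction h with
  | nil c => exact .nil c
  | @cons _ _ q δ _ _ hs hδ _ ih =>
    rw [← List.append_assoc] at hs ih
    exact .cons hs (by simp [hδ]) ih

theorem RunAbove.append_stack (h : RunAbove τ c π c') (ρ : List Γ) :
    RunAbove (τ ++ ρ) (c.1, c.2 ++ ρ) π (c'.1, c'.2 ++ ρ) := by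
  induction h with
  | nil c => exact .nil _
  | @cons _ _ q δ _ _ hs hδ _ ih =>
    have hs' := hs.append_stack ρ
    rw [List.append_assoc] at hs' ih
    exact .cons hs' hδ ih

theorem RunAbove.of_append_stack {q : Q} {σ ρ : List Γ} (h : RunAbove (τ ++ ρ) (q, σ ++ ρ) π c)
    (hσ : σ ≠ []) : ∃ σ', c.2 = σ' ++ ρ ∧ RunAbove τ (q, σ) π (c.1, σ') := by
  induction π generalizing q σ with
  | nil => cases h; exact ⟨σ, rfl, .nil _⟩
  | cons o π ih =>
    obtain _ | @⟨_, _, q₁, δ, _, _, hs, hδ, hr⟩ := h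
    obtain ⟨σ₁, hσ₁, hs'⟩ := hs.of_append_stack hσ
    rw [← List.append_assoc, List.append_cancel_right_eq] at hσ₁
    subst hσ₁
    rw [← List.append_assoc] at hr
    obtain ⟨σ', hc, hr'⟩ := ih hr (by simp [hδ])
    exact ⟨σ', hc, .cons hs' hδ hr'⟩

theorem RunFrom.runAbove (h : RunFrom c π c') (hc' : ∃ δ, δ ≠ [] ∧ c'.2 = δ ++ τ)
    (hpre : ∀ pre suf c₁, π = pre ++ suf → pre ≠ [] → suf ≠ [] → RunFrom c pre c₁ →
      ∃ δ, δ ≠ [] ∧ c₁.2 = δ ++ τ) :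
    RunAbove τ c π c' := by
  induction h with
  | nil c => exact .nil c
  | @cons c c₁ _ o π hs hr ih =>
    have hc₁ : ∃ δ, δ ≠ [] ∧ c₁.2 = δ ++ τ := by
      rcases eq_or_ne π [] with rfl | hπ
      · cases hr; exact hc'
      · exact hpre [o] π c₁ rfl (List.cons_ne_nil _ _) hπ (.cons hs (.nil _))
    obtain ⟨δ, hδ, hc₁⟩ := hc₁
    obtain ⟨q₁, σ₁⟩ := c₁
    subst hc₁
    refine .cons hs hδ (ih hc' fun pre suf c₂ hπ hpre' hsuf hr₂ => ?_)
    exact hpre (o :: pre) suf c₂ (by rw [hπ]; rfl) (List.cons_ne_nil _ _) hsuf (.cons hs hr₂)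

theorem RunAbove.exists_last_visit {q : Q} (h : RunAbove τ (q, τ) π c')
    (hc' : τ.length + 1 < c'.2.length) :
    ∃ (π₁ π₂ : List (Op Q Γ)) (u : Q) (w : Γ), π = π₁ ++ π₂ ∧ RunAbove τ (q, τ) π₁ (u, w :: τ) ∧
      RunAbove (w :: τ) (u, w :: τ) π₂ c' := by
  induction π using List.reverseRecOn generalizing c' with
  | nil => cases h; simp at hc'
  | append_singleton π o ih =>
    obtain ⟨⟨u, σ⟩, h₁, h₂⟩ := runAbove_append.mp h
    obtain ⟨hs, -⟩ := runAbove_singleton.mp h₂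
    rcases eq_or_ne π [] with rfl | hπ
    · cases h₁
      obtain ⟨v, hv⟩ := hs.eq_cons_of_length_lt (by simp only at hc' ⊢; omega)
      simp [hv] at hc'
    obtain ⟨δ, hδ, rfl⟩ := h₁.exists_stack_eq hπ
    by_cases hδ₁ : δ.length = 1
    · obtain ⟨w, rfl⟩ := List.length_eq_one_iff.mp hδ₁
      obtain ⟨v, hv⟩ := hs.eq_cons_of_length_lt (by simp only [List.length_append] at hc' ⊢; omega)
      exact ⟨π, [o], u, w, rfl, h₁,
        runAbove_singleton.mpr ⟨hs, [v], List.cons_ne_nil _ _, hv⟩⟩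
    · have hc₁ : τ.length + 1 < (δ ++ τ).length := by
        have := List.length_pos_iff.mpr hδ
        simp only [List.length_append]; omega
      obtain ⟨π₁, π₂, u₁, w, rfl, h₁₁, h₁₂⟩ := ih h₁ hc₁
      have hπ₂ : π₂ ≠ [] := by
        rintro rfl
        have := congrArg (·.2.length) h₁₂.eq_of_nil
        simp only [List.length_cons] at this
        omega
      obtain ⟨δ', hδ', hσ⟩ := h₁₂.exists_stack_eq hπ₂
      simp only at hσ
      rw [hσ] at hs
      obtain ⟨σ', hc'σ, -⟩ := hs.of_append_stack hδ'
      have hσ' : σ' ≠ [] := by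
        rintro rfl; simp [hc'σ] at hc'
      refine ⟨π₁, π₂ ++ [o], u₁, w, by simp, h₁₁, runAbove_append.mpr ⟨_, h₁₂, ?_⟩⟩
      rw [hσ]
      exact runAbove_singleton.mpr ⟨hs, σ', hσ', hc'σ⟩

end RunAbove

section PushComp

variable {Q Γ : Type} {π : List (Op Q Γ)} {q r u s : Q} {x y z : Γ}

theorem isPushComp_iff_runAbove :
    IsPushComp π q x r y ↔ RunAbove [x] (q, [x]) π (r, [y, x]) := by
  constructor
  · intro h
    obtain ⟨hrun, hpre⟩ := h []
    exact hrun.runAbove ⟨[y], List.cons_ne_nil _ _, rfl⟩ hpre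
  · intro h β
    have hβ : RunAbove (x :: β) (q, x :: β) π (r, y :: x :: β) := h.append_stack β
    refine ⟨hβ.runFrom, fun pre suf c hπ hpre _ hc => ?_⟩
    subst hπ
    obtain ⟨c₁, h₁, -⟩ := runAbove_append.mp hβ
    rw [hc.deterministic h₁.runFrom]
    exact h₁.exists_stack_eq hpre

theorem isPushComp_push : IsPushComp [Op.push q x r y] q x r y :=
  isPushComp_iff_runAbove.mpr (.cons (.push q x r y []) (δ := [y]) (List.cons_ne_nil _ _) (.nil _))

theorem IsPushComp.ne_nil (h : IsPushComp π q x r y) : π ≠ [] := by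
  rintro rfl
  cases isPushComp_iff_runAbove.mp h

theorem IsPushComp.append_repl (h : IsPushComp π q x s z) :
    IsPushComp (π ++ [Op.repl s z r y]) q x r y :=
  isPushComp_iff_runAbove.mpr <| runAbove_append.mpr
    ⟨_, isPushComp_iff_runAbove.mp h, .cons (.repl s z r y [x]) (δ := [y]) (List.cons_ne_nil _ _)
      (.nil _)⟩

theorem IsPushComp.append_pop {π₁ π₂ : List (Op Q Γ)} (h₁ : IsPushComp π₁ q x u y)
    (h₂ : IsPushComp π₂ u y s z) : IsPushComp (π₁ ++ π₂ ++ [Op.pop s z r]) q x r y := by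
  have h₂' : RunAbove [x] (u, [y, x]) π₂ (s, [z, y, x]) :=
    ((isPushComp_iff_runAbove.mp h₂).append_stack [x]).of_base_append (τ' := [y])
  refine isPushComp_iff_runAbove.mpr <| runAbove_append.mpr ⟨_, runAbove_append.mpr
    ⟨_, isPushComp_iff_runAbove.mp h₁, h₂'⟩, ?_⟩
  exact .cons (.pop s z r [y, x]) (δ := [y]) (List.cons_ne_nil _ _) (.nil _)

theorem RunAbove.exists_isPushComp_append (h : RunAbove [x] (q, [x]) π (s, [z, y, x])) :
    ∃ u π₁ π₂, π = π₁ ++ π₂ ∧ IsPushComp π₁ q x u y ∧ IsPushComp π₂ u y s z := by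
  obtain ⟨π₁, π₂, u, w, rfl, h₁, h₂⟩ := h.exists_last_visit (by simp)
  obtain ⟨σ, hσ, h₂'⟩ := h₂.of_append_stack (τ := [w]) (ρ := [x]) (σ := [w])
    (List.cons_ne_nil _ _)
  obtain rfl : [z, y] = σ := (List.append_inj' hσ rfl).1
  have hπ₂ : π₂ ≠ [] := by
    rintro rfl
    cases h₂'.eq_of_nil
  obtain ⟨δ, -, hδ⟩ := h₂'.exists_stack_eq hπ₂
  obtain ⟨-, hw⟩ := List.append_inj' (show [z] ++ [y] = δ ++ [w] from hδ) rfl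
  obtain rfl : y = w := List.singleton_inj.mp hw
  exact ⟨u, π₁, π₂, rfl, isPushComp_iff_runAbove.mpr h₁, isPushComp_iff_runAbove.mpr h₂'⟩

theorem isPushComp_append_singleton_iff {o : Op Q Γ} :
    IsPushComp (π ++ [o]) q x r y ↔
      (π = [] ∧ o = Op.push q x r y) ∨
      (∃ s z, o = Op.repl s z r y ∧ IsPushComp π q x s z) ∨
      (∃ s z u π₁ π₂, o = Op.pop s z r ∧ π = π₁ ++ π₂ ∧
        IsPushComp π₁ q x u y ∧ IsPushComp π₂ u y s z) := by
  refine ⟨fun h => ?_, ?_⟩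
  · obtain ⟨c, h₁, h₂⟩ := runAbove_append.mp (isPushComp_iff_runAbove.mp h)
    obtain ⟨hs, -⟩ := runAbove_singleton.mp h₂
    cases hs with
    | push =>
      have hπ : π = [] := by
        by_contra hπ
        obtain ⟨δ, hδ, hx⟩ := h₁.exists_stack_eq hπ
        have := congrArg List.length hx
        simp only [List.length_append, List.length_singleton] at this
        exact hδ (List.length_eq_zero_iff.mp (by omega))
      subst hπ
      cases h₁.eq_of_nil
      exact .inl ⟨rfl, rfl⟩
    | repl s z => exact .inr (.inl ⟨s, z, rfl, isPushComp_iff_runAbove.mpr h₁⟩)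
    | pop s z =>
      obtain ⟨u, π₁, π₂, rfl, h₁₁, h₁₂⟩ := h₁.exists_isPushComp_append
      exact .inr (.inr ⟨s, z, u, π₁, π₂, rfl, rfl, h₁₁, h₁₂⟩)
  · rintro (⟨rfl, rfl⟩ | ⟨s, z, rfl, h⟩ | ⟨s, z, u, π₁, π₂, rfl, rfl, h₁, h₂⟩)
    · exact isPushComp_push
    · exact h.append_repl
    · exact h₁.append_pop h₂

theorem IsPushComp.not_append {π₁ δ ρ : List (Op Q Γ)} {u' : Q} {y' : Γ}
    (h₁ : IsPushComp π₁ q x u y) (h₂ : IsPushComp (δ ++ ρ) u y s z) (hδ : δ ≠ []) :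
    ¬ IsPushComp (π₁ ++ δ) q x u' y' := by
  intro h
  obtain ⟨c, h₁', hδ'⟩ := runAbove_append.mp (isPushComp_iff_runAbove.mp h)
  cases h₁'.runFrom.deterministic (isPushComp_iff_runAbove.mp h₁).runFrom
  obtain ⟨c₂, hδ₂, -⟩ := runAbove_append.mp ((isPushComp_iff_runAbove.mp h₂).append_stack [x])
  cases hδ'.runFrom.deterministic hδ₂.runFrom
  obtain ⟨γ, hγ, hγ'⟩ := hδ₂.exists_stack_eq hδ
  have := congrArg List.length hγ'
  simp only [List.length_append, List.length_cons, List.length_nil] at this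
  exact hγ (List.length_eq_zero_iff.mp (by omega))

theorem IsPushComp.append_inj {π₁ π₂ π₁' π₂' : List (Op Q Γ)} {u' s' : Q} {z' : Γ}
    (h₁ : IsPushComp π₁ q x u y) (h₂ : IsPushComp π₂ u y s z)
    (h₁' : IsPushComp π₁' q x u' y) (h₂' : IsPushComp π₂' u' y s' z')
    (h : π₁ ++ π₂ = π₁' ++ π₂') : π₁ = π₁' ∧ u = u' := by
  have hπ₁ : π₁ = π₁' := by
    rcases List.append_eq_append_iff.mp h with ⟨δ, rfl, rfl⟩ | ⟨δ, rfl, rfl⟩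
    · rcases eq_or_ne δ [] with rfl | hδ
      · simp
      · exact absurd h₁' (h₁.not_append h₂ hδ)
    · rcases eq_or_ne δ [] with rfl | hδ
      · simp
      · exact absurd h₁ (h₁'.not_append h₂' hδ)
  subst hπ₁
  refine ⟨rfl, ?_⟩
  have := (isPushComp_iff_runAbove.mp h₁).runFrom.deterministic
    (isPushComp_iff_runAbove.mp h₁').runFrom
  exact (Prod.ext_iff.mp this).1

end PushComp

instance {Q Γ : Type} [Finite Q] [Finite Γ] : Finite (Op Q Γ) :=
  Finite.of_surjective
    (fun a : (Q × Γ × Q × Γ) ⊕ (Q × Γ × Q × Γ) ⊕ (Q × Γ × Q) => match a with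
      | .inl (q, x, r, y) => Op.push q x r y
      | .inr (.inl (q, x, r, y)) => Op.repl q x r y
      | .inr (.inr (q, x, r)) => Op.pop q x r)
    fun o => by
      cases o
      exacts [⟨.inl (_, _, _, _), rfl⟩, ⟨.inr (.inl (_, _, _, _)), rfl⟩,
        ⟨.inr (.inr (_, _, _)), rfl⟩]

/-- The push computations over the timesteps `i + 1, …, t`. -/
noncomputable def pushComps {Q Γ : Type} [Finite Q] [Finite Γ] (i t : ℕ) (q : Q) (x : Γ) (r : Q)
    (y : Γ) : Finset (List (Op Q Γ)) :=
  Set.Finite.toFinset (s := {π | π.length = t - i ∧ IsPushComp π q x r y})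
    ((List.finite_length_eq _ _).subset fun _ h => h.1)

section PushComps

variable {Q Γ : Type} [Finite Q] [Finite Γ] {i t : ℕ} {q r : Q} {x y : Γ}

theorem mem_pushComps {π : List (Op Q Γ)} :
    π ∈ pushComps i t q x r y ↔ π.length = t - i ∧ IsPushComp π q x r y :=
  Set.Finite.mem_toFinset _

theorem coe_pushComps :
    (pushComps i t q x r y : Set (List (Op Q Γ))) =
      {π | π.length = t - i ∧ IsPushComp π q x r y} :=
  Set.Finite.coe_toFinset _

theorem pushComps_self_succ : pushComps t (t + 1) q x r y = {[Op.push q x r y]} := by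
  ext π
  rw [mem_pushComps, Finset.mem_singleton]
  refine ⟨fun ⟨hlen, h⟩ => ?_, fun h => h ▸ ⟨by simp, isPushComp_push⟩⟩
  obtain ⟨o, rfl⟩ := List.length_eq_one_iff.mp (by omega : π.length = 1)
  rcases isPushComp_append_singleton_iff.mp (List.nil_append [o] ▸ h) with
    ⟨-, rfl⟩ | ⟨_, _, -, h'⟩ | ⟨_, _, _, π₁, _, -, hπ, h₁, -⟩
  · rfl
  · exact absurd rfl h'.ne_nil
  · exact absurd (List.append_eq_nil_iff.mp hπ.symm).1 h₁.ne_nil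

end PushComps

section Counting

variable {Q Γ : Type} [Fintype Q] [Fintype Γ] [DecidableEq Q] [DecidableEq Γ]
  {i t : ℕ} {q r : Q} {x y : Γ}

theorem pushComps_succ (hit : i < t) :
    pushComps i (t + 1) q x r y =
      ((Finset.univ : Finset (Q × Γ)).sigma fun sz => pushComps i t q x sz.1 sz.2).image
          (fun p => p.2 ++ [Op.repl p.1.1 p.1.2 r y]) ∪
        ((Finset.Ico (i + 1) t ×ˢ (Finset.univ : Finset (Q × Q × Γ))).sigma fun a =>
            pushComps i a.1 q x a.2.1 y ×ˢ pushComps a.1 t a.2.1 y a.2.2.1 a.2.2.2).image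
          (fun p => p.2.1 ++ p.2.2 ++ [Op.pop p.1.2.2.1 p.1.2.2.2 r]) := by
  ext π
  simp only [Finset.mem_union, Finset.mem_image, Finset.mem_sigma, Finset.mem_product,
    Finset.mem_univ, Finset.mem_Ico, mem_pushComps, true_and, and_true, Sigma.exists, Prod.exists]
  constructor
  · rintro ⟨hlen, h⟩
    obtain ⟨π', o, rfl⟩ :=
      (List.eq_nil_or_concat' π).resolve_left (by rintro rfl; simp at hlen; omega)
    simp only [List.length_append, List.length_singleton] at hlen
    rcases isPushComp_append_singleton_iff.mp h with
      ⟨rfl, -⟩ | ⟨s, z, rfl, h'⟩ | ⟨s, z, u, π₁, π₂, rfl, rfl, h₁, h₂⟩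
    · simp at hlen; omega
    · exact .inl ⟨s, z, π', ⟨by omega, h'⟩, rfl⟩
    · have := List.length_pos_iff.mpr h₁.ne_nil
      have := List.length_pos_iff.mpr h₂.ne_nil
      simp only [List.length_append] at hlen
      refine .inr ⟨i + π₁.length, u, s, z, π₁, π₂, ⟨⟨?_, ?_⟩, ⟨?_, h₁⟩, ?_, h₂⟩, rfl⟩
      all_goals omega
  · rintro (⟨s, z, π', ⟨hlen, h⟩, rfl⟩ |
      ⟨k, u, s, z, π₁, π₂, ⟨⟨hik, hkt⟩, ⟨hlen₁, h₁⟩, hlen₂, h₂⟩, rfl⟩)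
    · exact ⟨by simp; omega, h.append_repl⟩
    · exact ⟨by simp; omega, h₁.append_pop h₂⟩

theorem sum_pushComps_succ {M : Type*} [AddCommMonoid M] (f : List (Op Q Γ) → M)
    (hit : i < t) :
    ∑ π ∈ pushComps i (t + 1) q x r y, f π =
      ∑ s, ∑ z, ∑ π ∈ pushComps i t q x s z, f (π ++ [Op.repl s z r y]) +
      ∑ k ∈ Finset.Ico (i + 1) t, ∑ u, ∑ s, ∑ z, ∑ π₁ ∈ pushComps i k q x u y,
        ∑ π₂ ∈ pushComps k t u y s z, f (π₁ ++ π₂ ++ [Op.pop s z r]) := by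
  rw [pushComps_succ hit, Finset.sum_union, Finset.sum_image, Finset.sum_image, Finset.sum_sigma,
    Finset.sum_sigma, Fintype.sum_prod_type, Finset.sum_product]
  · simp only [Fintype.sum_prod_type, Finset.sum_product]
  · rintro ⟨⟨k, u, s, z⟩, π₁, π₂⟩ hp ⟨⟨k', u', s', z'⟩, π₁', π₂'⟩ hp' he
    simp only [Finset.coe_sigma, Set.mem_sigma_iff, Finset.coe_product, Set.mem_prod,
      Finset.mem_coe, Finset.mem_Ico, Finset.mem_univ, mem_pushComps] at hp hp'
    obtain ⟨h₁₂, ho⟩ := List.append_inj' he rfl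
    simp only [List.cons.injEq, Op.pop.injEq, and_true] at ho
    obtain ⟨rfl, rfl⟩ := ho
    obtain ⟨rfl, rfl⟩ := hp.2.1.2.append_inj hp.2.2.2 hp'.2.1.2 hp'.2.2.2 h₁₂
    obtain rfl := List.append_cancel_left h₁₂
    obtain rfl : k = k' := by omega
    rfl
  · rintro ⟨⟨s, z⟩, π⟩ - ⟨⟨s', z'⟩, π'⟩ - he
    obtain ⟨rfl, ho⟩ := List.append_inj' he rfl
    simp only [List.cons.injEq, Op.repl.injEq, and_true] at ho
    obtain ⟨rfl, rfl⟩ := ho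
    rfl
  · rw [Finset.disjoint_left]
    simp only [Finset.mem_image, not_exists, not_and]
    rintro _ ⟨_, -, rfl⟩ _ - he
    simpa using (List.append_inj' he rfl).2

end Counting

section Weights

variable {Q Γ : Type} (Δ : ℕ → Op Q Γ → ℝ)

theorem runWeight_append (m : ℕ) (π₁ π₂ : List (Op Q Γ)) :
    runWeight Δ m (π₁ ++ π₂) = runWeight Δ m π₁ * runWeight Δ (m + π₁.length) π₂ := by
  induction π₁ generalizing m with
  | nil => simp [runWeight]
  | cons o π₁ ih =>
    rw [List.cons_append, runWeight, runWeight, ih, mul_assoc, List.length_cons,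
      Nat.add_right_comm, Nat.add_assoc]

theorem runWeight_singleton (m : ℕ) (o : Op Q Γ) : runWeight Δ m [o] = Δ m o := by
  simp [runWeight]

noncomputable def pushWeight [Finite Q] [Finite Γ] (i t : ℕ) (q : Q) (x : Γ) (r : Q) (y : Γ) :
    ℝ :=
  ∑ π ∈ pushComps i t q x r y, runWeight Δ (i + 1) π

theorem pushWeight_self_succ [Finite Q] [Finite Γ] {t : ℕ} {q r : Q} {x y : Γ} :
    pushWeight Δ t (t + 1) q x r y = Δ (t + 1) (Op.push q x r y) := by
  rw [pushWeight, pushComps_self_succ, Finset.sum_singleton, runWeight_singleton]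

variable [Fintype Q] [Fintype Γ] [DecidableEq Q] [DecidableEq Γ] {i t : ℕ} {q r : Q} {x y : Γ}

theorem pushWeight_succ (hit : i < t) :
    pushWeight Δ i (t + 1) q x r y =
      ∑ s, ∑ z, pushWeight Δ i t q x s z * Δ (t + 1) (Op.repl s z r y) +
      ∑ k ∈ Finset.Ico (i + 1) t, ∑ u, pushWeight Δ i k q x u y *
        ∑ s, ∑ z, pushWeight Δ k t u y s z * Δ (t + 1) (Op.pop s z r) := by
  rw [pushWeight, sum_pushComps_succ _ hit]
  congr 1
  · refine Finset.sum_congr rfl fun s _ => Finset.sum_congr rfl fun z _ => ?_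
    rw [pushWeight, Finset.sum_mul]
    refine Finset.sum_congr rfl fun π hπ => ?_
    rw [runWeight_append, (mem_pushComps.mp hπ).1, runWeight_singleton]
    congr 2
    omega
  · refine Finset.sum_congr rfl fun k hk => Finset.sum_congr rfl fun u _ => ?_
    have hk := Finset.mem_Ico.mp hk
    simp only [pushWeight, Finset.mul_sum, Finset.sum_mul]
    refine Finset.sum_congr rfl fun s _ => Finset.sum_congr rfl fun z _ => ?_
    rw [Finset.sum_comm]
    refine Finset.sum_congr rfl fun π₂ hπ₂ => Finset.sum_congr rfl fun π₁ hπ₁ => ?_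
    rw [runWeight_append, runWeight_append, List.length_append, (mem_pushComps.mp hπ₁).1,
      (mem_pushComps.mp hπ₂).1, runWeight_singleton, mul_assoc]
    congr 3 <;> omega

end Weights

section Gam

variable {Q Γ : Type} [Fintype Q] [Fintype Γ] [DecidableEq Q] [DecidableEq Γ]
  (q₀ : Q) (bot : Γ) (Δ : ℕ → Op Q Γ → ℝ)

theorem gamTable_eq_gam {t t' : ℕ} (h : t' ≤ t) (I : ℕ) :
    gamTable q₀ bot Δ t t' I = gam q₀ bot Δ t' I := by
  induction t with
  | zero => obtain rfl := Nat.le_zero.mp h; rfl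
  | succ t ih =>
    rcases h.eq_or_lt with rfl | h
    · rfl
    · funext q x r y
      dsimp only [gamTable]
      rw [if_neg h.ne, ih (by omega)]

theorem gam_eq_zero_of_lt {t I : ℕ} (h : t < I) (q : Q) (x : Γ) (r : Q) (y : Γ) :
    gam q₀ bot Δ t I q x r y = 0 := by
  induction t generalizing q x r y with
  | zero => simp [gam, gamTable, h.ne']
  | succ t ih =>
    dsimp only [gam, gamTable]
    simp [h.ne', gamTable_eq_gam q₀ bot Δ le_rfl, ih (by omega),
      Finset.Ico_eq_empty_of_le (by omega : t ≤ I)]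

theorem gam_succ (t I : ℕ) (q : Q) (x : Γ) (r : Q) (y : Γ) :
    gam q₀ bot Δ (t + 1) I q x r y =
      (if I = t + 1 then Δ (t + 1) (Op.push q x r y) else 0)
      + ∑ s, ∑ z, gam q₀ bot Δ t I q x s z * Δ (t + 1) (Op.repl s z r y)
      + ∑ k ∈ Finset.Ico I t, ∑ u, gam q₀ bot Δ k I q x u y *
          ∑ s, ∑ z, gam q₀ bot Δ t (k + 1) u y s z * Δ (t + 1) (Op.pop s z r) := by
  dsimp only [gam, gamTable]
  rw [if_pos rfl]
  congr 1
  refine Finset.sum_congr rfl fun k hk => ?_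
  rw [gamTable_eq_gam q₀ bot Δ (Finset.mem_Ico.mp hk).2.le]
  rfl

theorem gam_eq_pushWeight {i t : ℕ} (hit : i < t) (q : Q) (x : Γ) (r : Q) (y : Γ) :
    gam q₀ bot Δ t (i + 1) q x r y = pushWeight Δ i t q x r y := by
  induction t using Nat.strong_induction_on generalizing i q x r y with
  | _ t ih =>
    obtain ⟨t, rfl⟩ := Nat.exists_eq_add_one_of_ne_zero (by omega : t ≠ 0)
    rw [gam_succ]
    rcases Nat.lt_succ_iff_lt_or_eq.mp hit with hit | rfl
    · rw [pushWeight_succ Δ hit, if_neg (by omega), zero_add]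
      congr 1
      · simp only [ih t (by omega) hit]
      · refine Finset.sum_congr rfl fun k hk => ?_
        have hk := Finset.mem_Ico.mp hk
        simp only [ih k (by omega) hk.1, ih t (by omega) hk.2]
    · simp [pushWeight_self_succ, gam_eq_zero_of_lt]

end Gam

theorem gam_correct_general {Q Γ : Type} [Fintype Q] [Fintype Γ] [DecidableEq Q] [DecidableEq Γ]
    (q₀ : Q) (bot : Γ) (Δ : ℕ → Op Q Γ → ℝ)
    (i t : ℕ) (hit : i < t) (q : Q) (x : Γ) (r : Q) (y : Γ) :
    gam q₀ bot Δ t (i + 1) q x r y =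
      ∑ᶠ π ∈ {π : List (Op Q Γ) | π.length = t - i ∧ IsPushComp π q x r y},
        runWeight Δ (i + 1) π := by
  rw [gam_eq_pushWeight q₀ bot Δ hit, pushWeight, ← finsum_mem_coe_finset, coe_pushComps]

/-- **Correctness of the inner weights of Lang's algorithm.**  For all `0 ≤ i < t` and all
states `q, r` and stack symbols `x, y`, the inner weight `γ[i→t][q,x→r,y]` equals the total
weight of all push computations over timesteps `i+1, …, t` from `(i, q, x)` to `(t, r, y)`
(each such computation being a sequence of `t - i` operations, weighted by the product of the
weights of its operations at timesteps `i+1, …, t`). -/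
theorem gam_correct {Q Γ : Type} [Fintype Q] [Fintype Γ] [DecidableEq Q] [DecidableEq Γ]
    (q₀ : Q) (bot : Γ) (Δ : ℕ → Op Q Γ → ℝ) (hΔ : ∀ k o, 0 ≤ Δ k o)
    (i t : ℕ) (hit : i < t) (q : Q) (x : Γ) (r : Q) (y : Γ) :
    gam q₀ bot Δ t (i + 1) q x r y =
      ∑ᶠ π ∈ {π : List (Op Q Γ) | π.length = t - i ∧ IsPushComp π q x r y},
        runWeight Δ (i + 1) π :=
  gam_correct_general q₀ bot Δ i t hit q x r y
end
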